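/- arXiv:math/0504538 — 5 statements merged into one kernel-verified Lean document; each statement's English description precedes it below -/
import Mathlib

section
/- The map sending a rational subtraction-free expression to its tropicalization, defined by replacing addition with minimum, multiplication with addition, and division with subtraction, is a well-defined homomorphism of semifields from the semifield of subtraction-free rational expressions in variables t_1,...,t_N (with usual + and ×) to the semifield of functions Z^N → Z (with pointwise min as addition and pointwise + as multiplication), sending each variable t_i to the i-th coordinate projection. -/
open MvPolynomial

/-- Subtraction-free rational expressions: the smallest subset of the field of
rational functions containing the variables and closed under `+`, `*`, `/`. -/
inductive IsSF (N : ℕ) : FractionRing (MvPolynomial (Fin N) ℚ) → Prop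
  | var (i : Fin N) :
      IsSF N (algebraMap (MvPolynomial (Fin N) ℚ) (FractionRing (MvPolynomial (Fin N) ℚ)) (X i))
  | add {f g} : IsSF N f → IsSF N g → IsSF N (f + g)
  | mul {f g} : IsSF N f → IsSF N g → IsSF N (f * g)
  | div {f g} : IsSF N f → IsSF N g → IsSF N (f / g)

/-!
Fix `t ∈ ℤ^N` and substitute for each variable `X i` the monomial with exponent `(t i, eᵢ)` in the
field of rational Hahn series over the ordered group `ℤ ×ₗ Lex ℤ^N`. Since the second component
records the exponent vector, distinct monomials go to distinct exponents, so the substitution is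
injective on polynomials and extends to the field of rational functions. Subtraction-free
expressions go to series with positive leading coefficient; for those the order is additive
under products and, since leading terms cannot cancel, takes the minimum under sums. The first
component of the order is therefore the tropicalization evaluated at `t`, and it depends only on
the rational function. Uniqueness is induction on the expression.
-/

theorem Prod.Lex.fst_min {α β : Type*} [LinearOrder α] [LinearOrder β] (a b : α ×ₗ β) :
    (ofLex (min a b)).1 = min (ofLex a).1 (ofLex b).1 :=
  Monotone.map_min fun a b => Prod.Lex.monotone_fst a b

namespace HahnSeries

section Order

variable {Γ R : Type*} [LinearOrder Γ] [AddCommGroup R] [LinearOrder R] [IsOrderedAddMonoid R]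

theorem orderTop_add_of_leadingCoeff_pos {x y : R⟦Γ⟧} (hx : 0 < x.leadingCoeff)
    (hy : 0 < y.leadingCoeff) : (x + y).orderTop = min x.orderTop y.orderTop := by
  rcases lt_trichotomy x.orderTop y.orderTop with h | h | h
  · rw [orderTop_add_eq_left h, min_eq_left h.le]
  · refine le_antisymm ?_ min_orderTop_le_orderTop_add
    have htop : x.orderTop ≠ ⊤ := orderTop_ne_top.2 (leadingCoeff_ne_zero.mp hx.ne')
    have hcoeff : (x + y).coeff (x.orderTop.untop htop) = x.leadingCoeff + y.leadingCoeff := by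
      rw [coeff_add, coeff_untop_eq_leadingCoeff]
      simp only [h, coeff_untop_eq_leadingCoeff]
    rw [h, min_self, ← h, ← WithTop.coe_untop _ htop]
    exact orderTop_le_of_coeff_ne_zero (by rw [hcoeff]; exact (add_pos hx hy).ne')
  · rw [orderTop_add_eq_right h, min_eq_right h.le]

theorem order_add_of_leadingCoeff_pos [Zero Γ] {x y : R⟦Γ⟧} (hx : 0 < x.leadingCoeff)
    (hy : 0 < y.leadingCoeff) : (x + y).order = min x.order y.order := by
  have hx0 : x ≠ 0 := leadingCoeff_ne_zero.mp hx.ne'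
  have hy0 : y ≠ 0 := leadingCoeff_ne_zero.mp hy.ne'
  have hxy0 : x + y ≠ 0 := by
    rw [← orderTop_ne_top, orderTop_add_of_leadingCoeff_pos hx hy]
    simp [hx0]
  apply WithTop.coe_injective
  rw [WithTop.coe_min, order_eq_orderTop_of_ne_zero hx0, order_eq_orderTop_of_ne_zero hy0,
    order_eq_orderTop_of_ne_zero hxy0, orderTop_add_of_leadingCoeff_pos hx hy]

end Order

theorem order_div {Γ R : Type*} [AddCommGroup Γ] [LinearOrder Γ] [IsOrderedAddMonoid Γ] [Field R]
    {x y : R⟦Γ⟧} (hx : x ≠ 0) (hy : y ≠ 0) : (x / y).order = x.order - y.order := by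
  rw [eq_sub_iff_add_eq, ← order_mul (div_ne_zero hx hy) hy, div_mul_cancel₀ x hy]

theorem prod_single_one {Γ R ι : Type*} [AddCommMonoid Γ] [LinearOrder Γ]
    [IsOrderedCancelAddMonoid Γ] [CommSemiring R] (s : Finset ι) (a : ι → Γ) :
    ∏ i ∈ s, single (a i) (1 : R) = single (∑ i ∈ s, a i) 1 := by
  classical
  induction s using Finset.induction with
  | empty => rfl
  | insert _ _ hi ih =>
    rw [Finset.prod_insert hi, Finset.sum_insert hi, ih, single_mul_single, one_mul]

end HahnSeries

namespace MvPolynomial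

open HahnSeries

variable {σ Γ R : Type*} [AddCommMonoid Γ] [LinearOrder Γ] [IsOrderedCancelAddMonoid Γ]
  [CommSemiring R] (φ : (σ →₀ ℕ) →+ Γ)

noncomputable def toHahnSeries : MvPolynomial σ R →+* R⟦Γ⟧ :=
  eval₂Hom HahnSeries.C fun i => single (φ (Finsupp.single i 1)) 1

theorem toHahnSeries_X (i : σ) :
    toHahnSeries φ (X i : MvPolynomial σ R) = single (φ (Finsupp.single i 1)) 1 :=
  eval₂_X _ _ _

theorem toHahnSeries_monomial (m : σ →₀ ℕ) (c : R) :
    toHahnSeries φ (monomial m c) = single (φ m) c := by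
  have hφ : φ m = m.sum fun i k => k • φ (Finsupp.single i 1) := by
    simp_rw [← map_nsmul, Finsupp.smul_single_one]
    rw [← map_finsuppSum, Finsupp.sum_single]
  rw [toHahnSeries, eval₂Hom_monomial, Finsupp.prod]
  simp only [single_pow, one_pow]
  rw [prod_single_one, HahnSeries.C_apply, single_mul_single, zero_add, mul_one, hφ, Finsupp.sum]

variable {φ}

theorem coeff_toHahnSeries (hφ : Function.Injective φ) (p : MvPolynomial σ R) (m : σ →₀ ℕ) :
    (toHahnSeries φ p).coeff (φ m) = p.coeff m := by
  induction p using MvPolynomial.induction_on' with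
  | monomial n c =>
    classical
    simp [toHahnSeries_monomial, coeff_single, coeff_monomial, hφ.eq_iff, eq_comm]
  | add p q hp hq => rw [map_add, HahnSeries.coeff_add, hp, hq, coeff_add]

theorem toHahnSeries_injective (hφ : Function.Injective φ) :
    Function.Injective (toHahnSeries φ : MvPolynomial σ R → R⟦Γ⟧) := by
  intro p q h
  ext m
  rw [← coeff_toHahnSeries hφ, h, coeff_toHahnSeries hφ]

end MvPolynomial

section Tropicalization

open HahnSeries

variable {N : ℕ}

def tropExponent (t : Fin N → ℤ) : (Fin N →₀ ℕ) →+ ℤ ×ₗ Lex (Fin N → ℤ) where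
  toFun m := toLex (m.sum fun i k => k * t i, toLex fun i => (m i : ℤ))
  map_zero' := by
    simp only [Finsupp.sum_zero_index, Finsupp.coe_zero, Pi.zero_apply, Nat.cast_zero]
    rfl
  map_add' m m' := by
    simp only [Finsupp.coe_add, Pi.add_apply, Nat.cast_add]
    rw [Finsupp.sum_add_index' (by simp) (fun _ _ _ => by push_cast; ring)]
    rfl

theorem tropExponent_injective (t : Fin N → ℤ) : Function.Injective (tropExponent t) := by
  intro m m' h
  ext i
  have hi : (m i : ℤ) = m' i :=
    congrArg (fun g : ℤ ×ₗ Lex (Fin N → ℤ) => ofLex (ofLex g).2 i) h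
  exact_mod_cast hi

theorem fst_tropExponent_single (t : Fin N → ℤ) (i : Fin N) :
    (ofLex (tropExponent t (Finsupp.single i 1))).1 = t i := by
  simp [tropExponent]

noncomputable def tropEval (t : Fin N → ℤ) :
    FractionRing (MvPolynomial (Fin N) ℚ) →+* ℚ⟦ℤ ×ₗ Lex (Fin N → ℤ)⟧ :=
  IsFractionRing.lift (MvPolynomial.toHahnSeries_injective (tropExponent_injective t))

theorem tropEval_X (t : Fin N → ℤ) (i : Fin N) :
    tropEval t (algebraMap (MvPolynomial (Fin N) ℚ) _ (X i)) =
      single (tropExponent t (Finsupp.single i 1)) 1 := by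
  rw [tropEval, IsFractionRing.lift_algebraMap, MvPolynomial.toHahnSeries_X]

theorem leadingCoeff_tropEval_pos (t : Fin N → ℤ) {f : FractionRing (MvPolynomial (Fin N) ℚ)}
    (hf : IsSF N f) : 0 < (tropEval t f).leadingCoeff := by
  suffices 0 < toLex (tropEval t f) from leadingCoeff_pos_iff.mpr this
  induction hf with
  | var i =>
    rw [tropEval_X, ← leadingCoeff_pos_iff, ofLex_toLex, leadingCoeff_of_single]
    exact one_pos
  | add _ _ hf hg => rw [map_add, toLex_add]; exact add_pos hf hg
  | mul _ _ hf hg => rw [map_mul, toLex_mul]; exact mul_pos hf hg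
  | div _ _ hf hg => rw [map_div₀, toLex_div]; exact div_pos hf hg

theorem tropEval_ne_zero (t : Fin N → ℤ) {f : FractionRing (MvPolynomial (Fin N) ℚ)}
    (hf : IsSF N f) : tropEval t f ≠ 0 :=
  leadingCoeff_ne_zero.mp (leadingCoeff_tropEval_pos t hf).ne'

noncomputable def tropicalization (N : ℕ) (f : {f // IsSF N f}) (t : Fin N → ℤ) : ℤ :=
  (ofLex (tropEval t f.1).order).1

theorem tropicalization_var (i : Fin N) :
    tropicalization N ⟨_, IsSF.var i⟩ = fun t => t i := by
  funext t
  rw [tropicalization, tropEval_X, order_single one_ne_zero, fst_tropExponent_single]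

variable (f g : {f // IsSF N f})

theorem tropicalization_add :
    tropicalization N ⟨f.1 + g.1, IsSF.add f.2 g.2⟩ =
      fun t => min (tropicalization N f t) (tropicalization N g t) := by
  funext t
  rw [tropicalization, map_add, order_add_of_leadingCoeff_pos (leadingCoeff_tropEval_pos t f.2)
    (leadingCoeff_tropEval_pos t g.2), Prod.Lex.fst_min]
  rfl

theorem tropicalization_mul :
    tropicalization N ⟨f.1 * g.1, IsSF.mul f.2 g.2⟩ =
      fun t => tropicalization N f t + tropicalization N g t := by
  funext t
  rw [tropicalization, map_mul, order_mul (tropEval_ne_zero t f.2) (tropEval_ne_zero t g.2)]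
  rfl

theorem tropicalization_div :
    tropicalization N ⟨f.1 / g.1, IsSF.div f.2 g.2⟩ =
      fun t => tropicalization N f t - tropicalization N g t := by
  funext t
  rw [tropicalization, map_div₀, order_div (tropEval_ne_zero t f.2) (tropEval_ne_zero t g.2)]
  rfl

end Tropicalization

/-- The tropicalization map is a well-defined homomorphism of semifields from the
semifield of subtraction-free rational expressions in `t_1, …, t_N` (usual `+`, `×`)
to the semifield of functions `ℤ^N → ℤ` (pointwise `min` as addition, pointwise `+`
as multiplication, pointwise `-` as division), sending `t_i` to the `i`-th projection. -/
theorem tropicalization_exists_unique (N : ℕ) :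
    ∃! T : {f : FractionRing (MvPolynomial (Fin N) ℚ) // IsSF N f} → ((Fin N → ℤ) → ℤ),
      (∀ i : Fin N, T ⟨_, IsSF.var i⟩ = fun t => t i) ∧
      (∀ f g : {f // IsSF N f},
        T ⟨f.1 + g.1, IsSF.add f.2 g.2⟩ = fun t => min (T f t) (T g t)) ∧
      (∀ f g : {f // IsSF N f},
        T ⟨f.1 * g.1, IsSF.mul f.2 g.2⟩ = fun t => T f t + T g t) ∧
      (∀ f g : {f // IsSF N f},
        T ⟨f.1 / g.1, IsSF.div f.2 g.2⟩ = fun t => T f t - T g t) := by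
  refine ⟨tropicalization N, ⟨tropicalization_var, tropicalization_add, tropicalization_mul,
    tropicalization_div⟩, ?_⟩
  rintro T ⟨hvar, hadd, hmul, hdiv⟩
  funext ⟨f, hf⟩
  induction hf with
  | var i => rw [hvar, tropicalization_var]
  | add hf hg ihf ihg =>
    rw [hadd ⟨_, hf⟩ ⟨_, hg⟩, tropicalization_add ⟨_, hf⟩ ⟨_, hg⟩, ihf, ihg]
  | mul hf hg ihf ihg =>
    rw [hmul ⟨_, hf⟩ ⟨_, hg⟩, tropicalization_mul ⟨_, hf⟩ ⟨_, hg⟩, ihf, ihg]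
  | div hf hg ihf ihg =>
    rw [hdiv ⟨_, hf⟩ ⟨_, hg⟩, tropicalization_div ⟨_, hf⟩ ⟨_, hg⟩, ihf, ihg]
end

section
/- For all nonnegative integers t_1, t_2, t_3, the tropicalization of the SL_3 transition map (t_1,t_2,t_3) ↦ (t_2t_3/(t_1+t_3), t_1+t_3, t_1t_2/(t_1+t_3)) is the piecewise-linear map (t_1,t_2,t_3) ↦ (t_2+t_3−min(t_1,t_3), min(t_1,t_3), t_1+t_2−min(t_1,t_3)). Moreover this piecewise-linear map is an involution on Z^3. -/
open Tropical

/-- Lusztig's piecewise-linear change of parametrization for `sl₃`. -/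
def RLusztig : ℤ × ℤ × ℤ → ℤ × ℤ × ℤ := fun p =>
  (p.2.1 + p.2.2 - min p.1 p.2.2, min p.1 p.2.2, p.1 + p.2.1 - min p.1 p.2.2)

/-- The tropicalization of `(t₁,t₂,t₃) ↦ (t₂t₃/(t₁+t₃), t₁+t₃, t₁t₂/(t₁+t₃))` is
the piecewise-linear map `RLusztig`, and `RLusztig` is an involution on `ℤ³`. -/
theorem sl3_trop_transition_and_involution :
    (∀ t1 t2 t3 : ℤ, 0 ≤ t1 → 0 ≤ t2 → 0 ≤ t3 →
      untrop (trop t2 * trop t3 / (trop t1 + trop t3)) = t2 + t3 - min t1 t3 ∧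
      untrop (trop t1 + trop t3) = min t1 t3 ∧
      untrop (trop t1 * trop t2 / (trop t1 + trop t3)) = t1 + t2 - min t1 t3 ∧
      RLusztig (t1, t2, t3) =
        (t2 + t3 - min t1 t3, min t1 t3, t1 + t2 - min t1 t3)) ∧
    (∀ p : ℤ × ℤ × ℤ, RLusztig (RLusztig p) = p) := by
  constructor
  · intro t1 t2 t3 _ _ _
    refine ⟨?_, ?_, ?_, rfl⟩ <;> simp [untrop_div, untrop_add, untrop_mul]
  · rintro ⟨a, b, c⟩
    simp only [RLusztig, Prod.mk.injEq]
    omega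
end

section
/- The map (t_1,t_2,t_3) ↦ (t_2+t_3−min(t_2, t_1+t_3), t_1+t_3, min(t_2, t_1+t_3)−t_3) on Z^3, which is the tropicalization of (t_1,t_2,t_3) ↦ (t_2t_3/(t_2+t_1t_3), t_1t_3, (t_2+t_1t_3)/t_3), is an involution on its natural domain: composing it with itself returns the identity. -/
/-- The change of string parametrization `R₋₁₂₁^₋₂₁₂` for `sl₃`,
the tropicalization of `(t₁,t₂,t₃) ↦ (t₂t₃/(t₂+t₁t₃), t₁t₃, (t₂+t₁t₃)/t₃)`. -/
def Rstring : ℤ × ℤ × ℤ → ℤ × ℤ × ℤ := fun p =>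
  (p.2.1 + p.2.2 - min p.2.1 (p.1 + p.2.2), p.1 + p.2.2,
    min p.2.1 (p.1 + p.2.2) - p.2.2)

/-- `Rstring` is an involution: composing it with itself is the identity. -/
theorem string_reparam_involution (p : ℤ × ℤ × ℤ) : Rstring (Rstring p) = p := by
  obtain ⟨a, b, c⟩ := p
  simp only [Rstring, Prod.mk.injEq]
  rcases le_total b (a + c) with h | h <;>
    simp [min_def] <;> omega
end

section
/- Let Γ_R be a rational polyhedral convex cone in R^n_{≥0}, let Γ = Γ_R ∩ Z^n_{≥0}, and let Γ' ⊆ Γ. Suppose (a) for all γ ∈ Γ and δ ∈ Γ \ Γ', one has γ + δ ∉ Γ', and (b) for all γ ∈ Γ' and all natural numbers m, one has mγ ∈ Γ'. Then Γ' is a union of sets of the form Φ_R ∩ Z^n_{≥0}, where each Φ_R is a face of Γ_R. -/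
/-- The cone of nonnegative real combinations of the rational vectors `v i`. -/
def coneSpanned {n m : ℕ} (v : Fin m → Fin n → ℚ) : Set (Fin n → ℝ) :=
  {x | ∃ c : Fin m → ℝ, (∀ i, 0 ≤ c i) ∧ x = ∑ i, c i • fun j => ((v i j : ℝ))}

/-- A rational polyhedral convex cone in `ℝⁿ`. -/
def IsRatPolyCone {n : ℕ} (C : Set (Fin n → ℝ)) : Prop :=
  ∃ (m : ℕ) (v : Fin m → Fin n → ℚ), C = coneSpanned v

/-- A face of a cone: the cone itself, or its intersection with a supporting hyperplane. -/
def IsFaceOf {n : ℕ} (C F : Set (Fin n → ℝ)) : Prop :=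
  F = C ∨ ∃ l : (Fin n → ℝ) →ₗ[ℝ] ℝ, (∀ x ∈ C, 0 ≤ l x) ∧ F = {x ∈ C | l x = 0}

/-- The set of integer points of a subset of `ℝⁿ`. -/
def intPts {n : ℕ} (S : Set (Fin n → ℝ)) : Set (Fin n → ℝ) :=
  {x ∈ S | ∀ i, ∃ z : ℤ, x i = (z : ℝ)}

/-!
Fix `γ ∈ Γ'` and call `x` dominated by `γ` if `N • γ - x ∈ Γ_R` for some `N`. Every generator `u`
of `Γ_R` that is not dominated is separated (Farkas) from the cone `ℝ≥0 γ - Γ_R` by a functional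
that is nonnegative on `Γ_R` and vanishes at `γ`; their sum exposes a face `Φ_R ∋ γ` all of whose
points are dominated. For an integer point `δ ∈ Φ_R`, `N • γ = (N • γ - δ) + δ` lies in `Γ'` by (b),
so (a) forces `δ ∈ Γ'`. Hence `Γ'` is the union of the integer points of such faces.

Farkas applies because finitely generated cones are closed: by the conic Carathéodory theorem they
are finite unions of cones over linearly independent families.
-/

open Pointwise

lemma Submodule.FG.neg {R E : Type*} [Semiring R] [AddCommGroup E] [Module R E]
    {C : Submodule R E} (hC : C.FG) : (-C).FG := by
  have : -C = C.map (-LinearMap.id) := by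
    ext x
    exact ⟨fun h => ⟨-x, h, neg_neg x⟩, by rintro ⟨y, hy, rfl⟩; simpa using hy⟩
  rw [this]
  exact hC.map _

namespace PointedCone

section Module

variable {E : Type*} [AddCommGroup E] [Module ℝ E]

lemma mem_hull_finset_iff {s : Finset E} {x : E} :
    x ∈ hull ℝ (s : Set E) ↔ ∃ c : E → ℝ, (∀ y ∈ s, 0 ≤ c y) ∧ ∑ y ∈ s, c y • y = x := by
  constructor
  · intro hx
    obtain ⟨f, -, rfl⟩ := Submodule.mem_span_finset.1 hx
    exact ⟨fun y => f y, fun y _ => (f y).2, rfl⟩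
  · rintro ⟨c, hc, rfl⟩
    exact Submodule.sum_mem _ fun y hy => (hull ℝ _).smul_mem (hc y hy) (subset_hull hy)

lemma exists_mem_hull_erase_of_not_linearIndepOn [DecidableEq E] {s : Finset E} {x : E}
    (hs : ¬LinearIndepOn ℝ id (s : Set E)) (hx : x ∈ hull ℝ (s : Set E)) :
    ∃ a ∈ s, x ∈ hull ℝ (s.erase a : Set E) := by
  obtain ⟨c, hc, rfl⟩ := mem_hull_finset_iff.1 hx
  obtain ⟨g, hg, hgpos⟩ : ∃ g : E → ℝ, ∑ y ∈ s, g y • y = 0 ∧ ∃ y ∈ s, 0 < g y := by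
    obtain ⟨g, hg, y, hy, hgy⟩ := not_linearIndepOn_finset_iff.1 hs
    rcases hgy.lt_or_gt with hneg | hpos
    · exact ⟨-g, by simpa [Finset.sum_neg_distrib] using hg, y, hy, by simpa using hneg⟩
    · exact ⟨g, hg, y, hy, hpos⟩
  -- move along the relation `g` until the first coefficient of `c` vanishes
  obtain ⟨a, ha, hmin⟩ := Finset.exists_min_image (s.filter (0 < g ·)) (fun y => c y / g y)
    (by simpa [Finset.filter_nonempty_iff] using hgpos)
  obtain ⟨has, hga⟩ := Finset.mem_filter.1 ha
  set t := c a / g a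
  have ht : 0 ≤ t := div_nonneg (hc a has) hga.le
  refine ⟨a, has, mem_hull_finset_iff.2 ⟨fun y => c y - t * g y, fun y hy => ?_, ?_⟩⟩
  · have hys := Finset.mem_of_mem_erase hy
    rcases le_or_gt (g y) 0 with hgy | hgy
    · nlinarith [hc y hys]
    · have := hmin y (Finset.mem_filter.2 ⟨hys, hgy⟩)
      rw [le_div_iff₀ hgy] at this
      linarith
  · rw [Finset.sum_erase _ (by simp [t, div_mul_cancel₀ _ hga.ne'])]
    simp [sub_smul, mul_smul, Finset.sum_sub_distrib, ← Finset.smul_sum, hg]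

theorem exists_linearIndepOn_subset_mem_hull {s : Finset E} {x : E}
    (hx : x ∈ hull ℝ (s : Set E)) :
    ∃ t ⊆ s, LinearIndepOn ℝ id (t : Set E) ∧ x ∈ hull ℝ (t : Set E) := by
  classical
  induction s using Finset.strongInduction with
  | H s ih =>
    by_cases hs : LinearIndepOn ℝ id (s : Set E)
    · exact ⟨s, subset_rfl, hs, hx⟩
    obtain ⟨a, ha, hxa⟩ := exists_mem_hull_erase_of_not_linearIndepOn hs hx
    obtain ⟨t, hts, ht, hxt⟩ := ih _ (Finset.erase_ssubset ha) hxa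
    exact ⟨t, hts.trans (Finset.erase_subset a s), ht, hxt⟩

lemma mem_hull_inter_ker {s : Set E} {l : E →ₗ[ℝ] ℝ} (hl : ∀ y ∈ s, 0 ≤ l y) {x : E}
    (hx : x ∈ hull ℝ s) (hlx : l x = 0) : x ∈ hull ℝ (s ∩ LinearMap.ker l) := by
  suffices ∀ x ∈ hull ℝ s, 0 ≤ l x ∧ (l x = 0 → x ∈ hull ℝ (s ∩ LinearMap.ker l)) from
    (this x hx).2 hlx
  intro x hx
  induction hx using Submodule.span_induction with
  | mem y hy => exact ⟨hl y hy, fun h => subset_hull ⟨hy, h⟩⟩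
  | zero => exact ⟨by simp, fun _ => zero_mem _⟩
  | add x y _ _ hx hy =>
    rw [map_add]
    exact ⟨add_nonneg hx.1 hy.1, fun h => add_mem (hx.2 (by linarith [hx.1, hy.1]))
      (hy.2 (by linarith [hx.1, hy.1]))⟩
  | smul a x _ hx =>
    have hax : l (a • x) = a * l x := map_smul l (a : ℝ) x
    refine ⟨hax ▸ mul_nonneg a.2 hx.1, fun h => ?_⟩
    rcases mul_eq_zero.1 (hax ▸ h) with ha | h
    · have : a = 0 := Subtype.ext ha
      simp [this]
    · exact Submodule.smul_mem _ a (hx.2 h)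

lemma exists_nat_smul_sub_mem_of_mem_hull_sup_neg {C : PointedCone ℝ E} {γ x : E} (hγ : γ ∈ C)
    (hx : x ∈ hull ℝ {γ} ⊔ -C) : ∃ N : ℕ, (N : ℝ) • γ - x ∈ C := by
  obtain ⟨y, hy, z, hz, rfl⟩ := Submodule.mem_sup.1 hx
  obtain ⟨a, rfl⟩ := Submodule.mem_span_singleton.1 hy
  refine ⟨⌈(a : ℝ)⌉₊, ?_⟩
  have : (⌈(a : ℝ)⌉₊ : ℝ) • γ - ((a : ℝ) • γ + z) = ((⌈(a : ℝ)⌉₊ : ℝ) - a) • γ + -z := by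
    rw [sub_smul]; abel
  exact this ▸ add_mem (C.smul_mem (sub_nonneg.2 (Nat.le_ceil _)) hγ) (Submodule.mem_neg.1 hz)

end Module

section Topology

variable {E : Type*} [AddCommGroup E] [Module ℝ E] [TopologicalSpace E] [IsTopologicalAddGroup E]
  [ContinuousSMul ℝ E] [T2Space E]

theorem isClosed_hull_of_linearIndepOn {t : Finset E} (ht : LinearIndepOn ℝ id (t : Set E)) :
    IsClosed (hull ℝ (t : Set E) : Set E) := by
  set L := Fintype.linearCombination ℝ (fun y : t => (y : E))
  have hL : Topology.IsClosedEmbedding L := LinearMap.isClosedEmbedding_of_injective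
    (LinearMap.ker_eq_bot.2 ht.fintypeLinearCombination_injective)
  have : (hull ℝ (t : Set E) : Set E) = L '' Set.Ici 0 := by
    ext x
    rw [SetLike.mem_coe, Submodule.mem_span_finset']
    constructor
    · rintro ⟨f, rfl⟩
      exact ⟨fun y => f y, fun y => (f y).2, rfl⟩
    · rintro ⟨c, hc, rfl⟩
      exact ⟨fun y => ⟨c y, hc y⟩, rfl⟩
  rw [this]
  exact hL.isClosedMap _ isClosed_Ici

theorem isClosed_of_fg {C : PointedCone ℝ E} (hC : C.FG) : IsClosed (C : Set E) := by
  classical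
  obtain ⟨s, rfl⟩ := hC
  have : (hull ℝ (s : Set E) : Set E) =
      ⋃ t ∈ s.powerset.filter (fun t : Finset E => LinearIndepOn ℝ id (t : Set E)), hull ℝ (t : Set E) := by
    ext x
    simp only [SetLike.mem_coe, Set.mem_iUnion, Finset.mem_filter, Finset.mem_powerset,
      exists_prop]
    constructor
    · intro hx
      obtain ⟨t, hts, ht, hxt⟩ := exists_linearIndepOn_subset_mem_hull hx
      exact ⟨t, ⟨hts, ht⟩, hxt⟩
    · rintro ⟨t, ⟨hts, -⟩, hxt⟩
      exact Submodule.span_mono (by exact_mod_cast hts) hxt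
  rw [this]
  exact isClosed_biUnion_finset fun t ht => isClosed_hull_of_linearIndepOn (Finset.mem_filter.1 ht).2

variable [LocallyConvexSpace ℝ E]

theorem exists_strongDual_nonneg_neg_of_fg_of_notMem {C : PointedCone ℝ E} (hC : C.FG) {x : E}
    (hx : x ∉ C) : ∃ f : StrongDual ℝ E, (∀ y ∈ C, 0 ≤ f y) ∧ f x < 0 :=
  ProperCone.hyperplane_separation_point ⟨C, isClosed_of_fg hC⟩ hx

lemma exists_nonneg_eq_zero_pos_of_fg_of_notMem_hull_sup_neg {C : PointedCone ℝ E} (hC : C.FG)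
    {γ u : E} (hγ : γ ∈ C) (hu : u ∉ hull ℝ {γ} ⊔ -C) :
    ∃ l : E →ₗ[ℝ] ℝ, (∀ x ∈ C, 0 ≤ l x) ∧ l γ = 0 ∧ 0 < l u := by
  obtain ⟨f, hf, hfu⟩ := exists_strongDual_nonneg_neg_of_fg_of_notMem
    ((Submodule.fg_span (Set.finite_singleton γ)).sup hC.neg) hu
  have hfC : ∀ x ∈ C, 0 ≤ -f x := fun x hx => by
    simpa using hf (-x) (Submodule.mem_sup_right (by simpa using hx))
  refine ⟨-(f : E →ₗ[ℝ] ℝ), hfC, le_antisymm ?_ (hfC γ hγ), by simpa using hfu⟩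
  simpa using hf γ (Submodule.mem_sup_left (subset_hull rfl))

theorem exists_exposedFace_le_hull_sup_neg_of_fg {C : PointedCone ℝ E} (hC : C.FG) {γ : E}
    (hγ : γ ∈ C) :
    ∃ l : E →ₗ[ℝ] ℝ, (∀ x ∈ C, 0 ≤ l x) ∧ l γ = 0 ∧
      ∀ x ∈ C, l x = 0 → x ∈ hull ℝ {γ} ⊔ -C := by
  classical
  obtain ⟨s, hs⟩ := id hC
  set B := s.filter (· ∉ hull ℝ {γ} ⊔ -C)
  choose! L hLC hLγ hLu using fun u (hu : u ∈ B) =>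
    exists_nonneg_eq_zero_pos_of_fg_of_notMem_hull_sup_neg hC hγ (Finset.mem_filter.1 hu).2
  have hsC : ∀ u ∈ s, u ∈ C := fun u hu => hs ▸ subset_hull hu
  refine ⟨∑ u ∈ B, L u, fun x hx => ?_, ?_, fun x hx hlx => ?_⟩
  · rw [LinearMap.sum_apply]
    exact Finset.sum_nonneg fun u hu => hLC u hu x hx
  · rw [LinearMap.sum_apply]
    exact Finset.sum_eq_zero hLγ
  · rw [← hs] at hx
    refine Submodule.span_le.2 ?_ (mem_hull_inter_ker (fun y hy => ?_) hx hlx)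
    · rintro u ⟨hus, hlu⟩
      by_contra huD
      have hB : u ∈ B := Finset.mem_filter.2 ⟨hus, huD⟩
      have : L u u ≤ (∑ v ∈ B, L v) u := by
        rw [LinearMap.sum_apply]
        exact Finset.single_le_sum (fun v hv => hLC v hv u (hsC u hus)) hB
      linarith [hLu u hB, LinearMap.mem_ker.1 hlu]
    · rw [LinearMap.sum_apply]
      exact Finset.sum_nonneg fun u hu => hLC u hu y (hsC y hy)

end Topology

end PointedCone

lemma IsRatPolyCone.exists_fg {n : ℕ} {C : Set (Fin n → ℝ)} (hC : IsRatPolyCone C) :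
    ∃ K : PointedCone ℝ (Fin n → ℝ), K.FG ∧ (K : Set (Fin n → ℝ)) = C := by
  obtain ⟨m, v, rfl⟩ := hC
  refine ⟨PointedCone.hull ℝ (Set.range fun i j => (v i j : ℝ)),
    Submodule.fg_span (Set.finite_range _), ?_⟩
  ext x
  rw [SetLike.mem_coe, Submodule.mem_span_range_iff_exists_fun]
  constructor
  · rintro ⟨c, rfl⟩
    exact ⟨fun i => c i, fun i => (c i).2, rfl⟩
  · rintro ⟨c, hc, rfl⟩
    exact ⟨fun i => ⟨c i, hc i⟩, rfl⟩

lemma nat_smul_sub_mem_intPts {n N : ℕ} {S T C : Set (Fin n → ℝ)} {x y : Fin n → ℝ}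
    (hx : x ∈ intPts S) (hy : y ∈ intPts T) (h : (N : ℝ) • x - y ∈ C) :
    (N : ℝ) • x - y ∈ intPts C := by
  refine ⟨h, fun i => ?_⟩
  obtain ⟨a, ha⟩ := hx.2 i
  obtain ⟨b, hb⟩ := hy.2 i
  exact ⟨N * a - b, by simp [ha, hb]⟩

theorem union_of_faces_general {n : ℕ} (C : Set (Fin n → ℝ)) (hC : IsRatPolyCone C)
    (Γ' : Set (Fin n → ℝ)) (hsub : Γ' ⊆ intPts C)
    (ha : ∀ γ ∈ intPts C, ∀ δ ∈ intPts C, δ ∉ Γ' → γ + δ ∉ Γ')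
    (hb : ∀ γ ∈ Γ', ∀ m : ℕ, (m : ℝ) • γ ∈ Γ') :
    ∃ 𝓕 : Set (Set (Fin n → ℝ)), (∀ F ∈ 𝓕, IsFaceOf C F) ∧
      Γ' = ⋃ F ∈ 𝓕, intPts F := by
  obtain ⟨K, hK, rfl⟩ := hC.exists_fg
  refine ⟨{F | IsFaceOf K F ∧ intPts F ⊆ Γ'}, fun F hF => hF.1,
    subset_antisymm (fun γ hγ => ?_) (Set.iUnion₂_subset fun F hF => hF.2)⟩
  obtain ⟨hγK, hγint⟩ := hsub hγ
  obtain ⟨l, hlK, hlγ, hker⟩ := PointedCone.exists_exposedFace_le_hull_sup_neg_of_fg hK hγK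
  refine Set.mem_biUnion ⟨Or.inr ⟨l, hlK, rfl⟩, ?_⟩ ⟨⟨hγK, hlγ⟩, hγint⟩
  rintro δ ⟨⟨hδK, hlδ⟩, hδint⟩
  obtain ⟨N, hN⟩ := PointedCone.exists_nat_smul_sub_mem_of_mem_hull_sup_neg hγK (hker δ hδK hlδ)
  by_contra hδ
  exact ha _ (nat_smul_sub_mem_intPts (hsub hγ) ⟨hδK, hδint⟩ hN) δ ⟨hδK, hδint⟩ hδ
    (by simpa using hb γ hγ N)

/-- Lemma: if `Γ' ⊆ Γ = C ∩ ℤⁿ_{≥0}` satisfies (a) `γ ∈ Γ`, `δ ∈ Γ \ Γ'` implies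
`γ + δ ∉ Γ'`, and (b) `γ ∈ Γ'`, `m ∈ ℕ` implies `mγ ∈ Γ'`, then `Γ'` is a union of
sets of the form `Φ ∩ ℤⁿ_{≥0}` with `Φ` a face of `C`. -/
theorem union_of_faces {n : ℕ} (C : Set (Fin n → ℝ)) (hC : IsRatPolyCone C)
    (hpos : ∀ x ∈ C, ∀ i, 0 ≤ x i)
    (Γ' : Set (Fin n → ℝ)) (hsub : Γ' ⊆ intPts C)
    (ha : ∀ γ ∈ intPts C, ∀ δ ∈ intPts C, δ ∉ Γ' → γ + δ ∉ Γ')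
    (hb : ∀ γ ∈ Γ', ∀ m : ℕ, (m : ℝ) • γ ∈ Γ') :
    ∃ 𝓕 : Set (Set (Fin n → ℝ)), (∀ F ∈ 𝓕, IsFaceOf C F) ∧
      Γ' = ⋃ F ∈ 𝓕, intPts F :=
  union_of_faces_general C hC Γ' hsub ha hb
end

section
/- Let C be a rational polyhedral convex cone in R^n, let γ be an integer point of C, and let Φ be a face of C containing γ in its relative interior. Then for every integer point δ of Φ there exists a positive integer m such that mγ − δ lies in Φ; in particular mγ − δ is an integer point of C. -/
lemma cone_smul_mem {n m : ℕ} (v : Fin m → Fin n → ℚ) {x : Fin n → ℝ}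
    (hx : x ∈ coneSpanned v) {r : ℝ} (hr : 0 ≤ r) : r • x ∈ coneSpanned v := by
  obtain ⟨c, hc, rfl⟩ := hx
  refine ⟨fun i => r * c i, fun i => mul_nonneg hr (hc i), ?_⟩
  rw [Finset.smul_sum]
  exact Finset.sum_congr rfl fun i _ => (mul_smul r (c i) _).symm

lemma face_smul_mem {n : ℕ} {C Φ : Set (Fin n → ℝ)} (hC : IsRatPolyCone C)
    (hΦ : IsFaceOf C Φ) {x : Fin n → ℝ} (hx : x ∈ Φ) {r : ℝ} (hr : 0 ≤ r) :
    r • x ∈ Φ := by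
  obtain ⟨m, v, rfl⟩ := hC
  rcases hΦ with rfl | ⟨l, hl, rfl⟩
  · exact cone_smul_mem v hx hr
  · exact ⟨cone_smul_mem v hx.1 hr, by rw [map_smul, hx.2, smul_eq_mul, mul_zero]⟩

lemma face_subset {n : ℕ} {C Φ : Set (Fin n → ℝ)} (hΦ : IsFaceOf C Φ) : Φ ⊆ C := by
  rcases hΦ with rfl | ⟨l, hl, rfl⟩
  · exact subset_rfl
  · exact fun x hx => hx.1

/-- If `γ` is an integer point of the relative (intrinsic) interior of a face `Φ` of a
rational polyhedral cone `C`, then for every integer point `δ` of `Φ` there is a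
positive integer `m` with `mγ - δ ∈ Φ`; in particular `mγ - δ` is an integer point of `C`. -/
theorem relint_face_step {n : ℕ} (C Φ : Set (Fin n → ℝ)) (hC : IsRatPolyCone C)
    (hΦ : IsFaceOf C Φ) (γ : Fin n → ℝ) (hγint : γ ∈ intPts C)
    (hγ : γ ∈ intrinsicInterior ℝ Φ) :
    ∀ δ ∈ intPts Φ, ∃ m : ℕ, 0 < m ∧
      ((m : ℝ) • γ - δ ∈ Φ ∧ (m : ℝ) • γ - δ ∈ intPts C) := by
  intro δ hδ
  obtain ⟨x, hx, hxγ⟩ := hγ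
  have hγΦ : γ ∈ Φ := by
    have h := interior_subset hx
    rwa [Set.mem_preimage, hxγ] at h
  have hγspan : γ ∈ affineSpan ℝ Φ := subset_affineSpan ℝ Φ hγΦ
  have hδspan : δ ∈ affineSpan ℝ Φ := subset_affineSpan ℝ Φ hδ.1
  have hmem : ∀ t : ℝ, t • (γ - δ) + γ ∈ affineSpan ℝ Φ := by
    intro t
    have := AffineSubspace.smul_vsub_vadd_mem (affineSpan ℝ Φ) t hγspan hδspan hγspan
    simpa [vsub_eq_sub, vadd_eq_add] using this
  set g : ℝ → (affineSpan ℝ Φ : Set (Fin n → ℝ)) := fun t => ⟨t • (γ - δ) + γ, hmem t⟩ with hg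
  have hgc : Continuous g := by
    apply Continuous.subtype_mk
    exact (continuous_id.smul continuous_const).add continuous_const
  have hg0 : g 0 = x := by
    apply Subtype.ext
    simp [hg, hxγ]
  have hnhds : g ⁻¹' interior ((↑) ⁻¹' Φ) ∈ nhds (0 : ℝ) := by
    apply hgc.continuousAt.preimage_mem_nhds
    rw [hg0]
    exact isOpen_interior.mem_nhds hx
  obtain ⟨ε, hε, hball⟩ := Metric.mem_nhds_iff.mp hnhds
  obtain ⟨k, hk⟩ := exists_nat_one_div_lt hε
  set t : ℝ := 1 / (k + 1) with ht
  have htpos : 0 < t := by positivity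
  have htball : t ∈ Metric.ball (0 : ℝ) ε := by
    rw [Metric.mem_ball, Real.dist_eq, sub_zero, abs_of_pos htpos]
    exact_mod_cast hk
  have hpΦ : t • (γ - δ) + γ ∈ Φ := by
    have h := interior_subset (hball htball)
    simpa [hg] using h
  have hΦmem : ((k + 2 : ℕ) : ℝ) • γ - δ ∈ Φ := by
    have hscaled : ((k : ℝ) + 1) • (t • (γ - δ) + γ) ∈ Φ :=
      face_smul_mem hC hΦ hpΦ (by positivity)
    have heq : ((k : ℝ) + 1) • (t • (γ - δ) + γ) = ((k + 2 : ℕ) : ℝ) • γ - δ := by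
      have hne : (k : ℝ) + 1 ≠ 0 := by positivity
      rw [smul_add, smul_smul, ht, mul_one_div, div_self hne, one_smul]
      push_cast
      funext j
      simp only [Pi.add_apply, Pi.sub_apply, Pi.smul_apply, smul_eq_mul]
      ring
    exact heq ▸ hscaled
  have hint : ∀ i, ∃ z : ℤ, (((k + 2 : ℕ) : ℝ) • γ - δ) i = (z : ℝ) := by
    intro i
    obtain ⟨zg, hzg⟩ := hγint.2 i
    obtain ⟨zd, hzd⟩ := hδ.2 i
    exact ⟨(k + 2 : ℤ) * zg - zd, by
      simp only [Pi.sub_apply, Pi.smul_apply, smul_eq_mul, hzg, hzd]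
      push_cast; ring⟩
  exact ⟨k + 2, by omega, hΦmem, face_subset hΦ hΦmem, hint⟩
end
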